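/- Let r ≥ 0, 0 < s < 1 + r, a ≤ r, a < 1 + r − s, a < 1/2, and let b' ∈ (1/2, 1/2 + ε) for ε > 0 sufficiently small (depending on r, s, a). Then sup_{k∈ℤ} Σ_{l∈ℤ, l≠±k} ⟨k⟩^{2s+2a} ⟨l⟩^{−2s} ⟨k−l⟩^{−2r} ⟨l+k⟩^{−(2−2b')} ⟨l−k⟩^{−(2−2b')} < ∞. -/

import Mathlib

/-!
Write `K = ⟨k⟩`, `A = ⟨l⟩`, `B = ⟨l - k⟩`, `D = ⟨l + k⟩`. Since `k = l - (l - k) = (l + k) - l` and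
`2k = (l + k) - (l - k)`, the bracket `K` is at most the sum of any two of `A, B, D`, so the two
larger of them are at least `K / 2`. Their decay pays for the weight `K ^ α`, `α = max (2s + 2a) 0`,
and what remains, once `b'` is close to `1/2`, is at most `2 ^ α U ^ (-3/2)` for the smallest one `U`.
So the summand is at most `2 ^ α (A ^ (-3/2) + B ^ (-3/2) + D ^ (-3/2))`, whose sum over `l` is
`3 · 2 ^ α ∑ ⟨l⟩ ^ (-3/2)` whatever `k` is.
-/

/-- Japanese bracket. -/
noncomputable def jb (x : ℝ) : ℝ := Real.sqrt (1 + x ^ 2)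

open Real

lemma rpow_mul_rpow_neg_le_of_le_min {K U V W α eU eV eW p : ℝ} (hU : 1 ≤ U) (hUV : U ≤ V)
    (hUW : U ≤ W) (hK : 0 ≤ K) (hKV : K ≤ U + V) (hKW : K ≤ U + W) (hα : 0 ≤ α)
    (heV : 0 ≤ eV) (heW : 0 ≤ eW) (hαe : α ≤ eV + eW) (hαp : α + p ≤ eU + eV + eW) :
    K ^ α * U ^ (-eU) * V ^ (-eV) * W ^ (-eW) ≤ 2 ^ α * U ^ (-p) := by
  have hKm : K ≤ 2 * min V W := by
    rcases min_choice V W with h | h <;> rw [h] <;> linarith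
  set m := min V W
  set d := max (p - eU) 0
  have hm : 1 ≤ m := le_min (hU.trans hUV) (hU.trans hUW)
  have hm0 : 0 < m := one_pos.trans_le hm
  have hUd : U ^ (-eU) ≤ U ^ (-p) * m ^ d := by
    calc U ^ (-eU) ≤ U ^ (-p + d) :=
          rpow_le_rpow_of_exponent_le hU (by linarith [le_max_left (p - eU) 0])
      _ = U ^ (-p) * U ^ d := rpow_add (by linarith) _ _
      _ ≤ U ^ (-p) * m ^ d := by gcongr; exact le_min hUV hUW
  have hd : d + -eV + -eW ≤ -α := by
    have := max_le (show p - eU ≤ eV + eW - α by linarith) (show 0 ≤ eV + eW - α by linarith)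
    linarith
  calc K ^ α * U ^ (-eU) * V ^ (-eV) * W ^ (-eW)
      ≤ K ^ α * (U ^ (-p) * m ^ d) * m ^ (-eV) * m ^ (-eW) := by
        have hV := rpow_le_rpow_of_nonpos hm0 (min_le_left V W) (neg_nonpos.2 heV)
        have hW := rpow_le_rpow_of_nonpos hm0 (min_le_right V W) (neg_nonpos.2 heW)
        gcongr <;> exact rpow_nonneg (by linarith) _
    _ = K ^ α * m ^ (d + -eV + -eW) * U ^ (-p) := by
        rw [rpow_add hm0, rpow_add hm0]; ring
    _ ≤ K ^ α * m ^ (-α) * U ^ (-p) := by gcongr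
    _ = (K / m) ^ α * U ^ (-p) := by
        rw [div_rpow hK hm0.le, rpow_neg hm0.le, div_eq_mul_inv]
    _ ≤ 2 ^ α * U ^ (-p) := by gcongr; rwa [div_le_iff₀ hm0]

lemma rpow_mul_rpow_neg_le_sum {K A B D α eA eB eD p : ℝ} (hA : 1 ≤ A) (hB : 1 ≤ B)
    (hD : 1 ≤ D) (hK : 0 ≤ K) (hKAB : K ≤ A + B) (hKAD : K ≤ A + D) (hKBD : K ≤ B + D)
    (hα : 0 ≤ α) (heA : 0 ≤ eA) (heB : 0 ≤ eB) (heD : 0 ≤ eD) (hαBD : α ≤ eB + eD)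
    (hαAD : α ≤ eA + eD) (hαAB : α ≤ eA + eB) (hαp : α + p ≤ eA + eB + eD) :
    K ^ α * A ^ (-eA) * B ^ (-eB) * D ^ (-eD) ≤ 2 ^ α * (A ^ (-p) + B ^ (-p) + D ^ (-p)) := by
  have hA0 : 0 ≤ A ^ (-p) := rpow_nonneg (by linarith) _
  have hB0 : 0 ≤ B ^ (-p) := rpow_nonneg (by linarith) _
  have hD0 : 0 ≤ D ^ (-p) := rpow_nonneg (by linarith) _
  by_cases hAmin : A ≤ B ∧ A ≤ D
  · calc _ ≤ 2 ^ α * A ^ (-p) :=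
          rpow_mul_rpow_neg_le_of_le_min hA hAmin.1 hAmin.2 hK hKAB hKAD hα heB heD hαBD hαp
      _ ≤ _ := by gcongr; linarith
  rcases le_or_gt B D with hBD | hDB
  · have hBA : B ≤ A := by
      by_contra!; exact hAmin ⟨this.le, this.le.trans hBD⟩
    calc _ = K ^ α * B ^ (-eB) * A ^ (-eA) * D ^ (-eD) := by ring
      _ ≤ 2 ^ α * B ^ (-p) :=
          rpow_mul_rpow_neg_le_of_le_min hB hBA hBD hK (by linarith) hKBD hα heA heD hαAD
            (by linarith)
      _ ≤ _ := by gcongr; linarith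
  · have hDA : D ≤ A := by
      by_contra!; exact hAmin ⟨this.le.trans hDB.le, this.le⟩
    calc _ = K ^ α * D ^ (-eD) * A ^ (-eA) * B ^ (-eB) := by ring
      _ ≤ 2 ^ α * D ^ (-p) :=
          rpow_mul_rpow_neg_le_of_le_min hD hDA hDB.le hK (by linarith) (by linarith) hα heA heB
            hαAB (by linarith)
      _ ≤ _ := by gcongr; linarith

lemma one_le_jb (x : ℝ) : 1 ≤ jb x :=
  Real.one_le_sqrt.2 (le_add_of_nonneg_right (sq_nonneg x))

lemma jb_pos (x : ℝ) : 0 < jb x :=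
  zero_lt_one.trans_le (one_le_jb x)

lemma jb_neg (x : ℝ) : jb (-x) = jb x := by
  rw [jb, jb, neg_sq]

lemma jb_sub_comm (x y : ℝ) : jb (x - y) = jb (y - x) := by
  rw [← jb_neg, neg_sub]

lemma jb_sq (x : ℝ) : jb x ^ 2 = 1 + x ^ 2 :=
  Real.sq_sqrt (by positivity)

lemma abs_le_jb (x : ℝ) : |x| ≤ jb x :=
  Real.abs_le_sqrt (le_add_of_nonneg_left zero_le_one)

lemma jb_add_le (x y : ℝ) : jb (x + y) ≤ jb x + jb y := by
  have hx := abs_le_jb x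
  have hy := abs_le_jb y
  have hxy : x * y ≤ jb x * jb y := (le_abs_self _).trans <|
    (abs_mul x y).trans_le (mul_le_mul hx hy (abs_nonneg y) (zero_le_one.trans (one_le_jb x)))
  rw [jb, Real.sqrt_le_iff]
  exact ⟨by linarith [one_le_jb x, one_le_jb y], by nlinarith [jb_sq x, jb_sq y]⟩

lemma jb_rpow_mul_rpow_neg_le_sum (x y : ℝ) {α eA eB eD p : ℝ} (hα : 0 ≤ α) (heA : 0 ≤ eA)
    (heB : 0 ≤ eB) (heD : 0 ≤ eD) (hαBD : α ≤ eB + eD) (hαAD : α ≤ eA + eD)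
    (hαAB : α ≤ eA + eB) (hαp : α + p ≤ eA + eB + eD) :
    jb x ^ α * jb y ^ (-eA) * jb (y - x) ^ (-eB) * jb (y + x) ^ (-eD)
      ≤ 2 ^ α * (jb y ^ (-p) + jb (y - x) ^ (-p) + jb (y + x) ^ (-p)) := by
  have hAB : jb x ≤ jb y + jb (y - x) := by
    simpa [jb_sub_comm] using jb_add_le y (x - y)
  have hAD : jb x ≤ jb y + jb (y + x) := by
    simpa [jb_neg, add_comm] using jb_add_le (y + x) (-y)
  have hBD : jb x ≤ jb (y - x) + jb (y + x) := by
    have h2x : jb x ≤ jb (2 * x) := Real.sqrt_le_sqrt (by nlinarith [sq_nonneg x])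
    have := jb_add_le (y + x) (-(y - x))
    rw [jb_neg, show y + x + -(y - x) = 2 * x by ring] at this
    linarith
  exact rpow_mul_rpow_neg_le_sum (one_le_jb _) (one_le_jb _) (one_le_jb _)
    (zero_le_one.trans (one_le_jb x)) hAB hAD hBD hα heA heB heD hαBD hαAD hαAB hαp

lemma summable_jb_rpow_neg {p : ℝ} (hp : 1 < p) : Summable fun l : ℤ => jb l ^ (-p) := by
  refine (summable_abs_int_rpow hp).of_norm_bounded_eventually ?_
  filter_upwards [Filter.eventually_cofinite_ne 0] with l hl
  rw [Real.norm_of_nonneg (rpow_nonneg (zero_le_one.trans (one_le_jb _)) _)]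
  exact rpow_le_rpow_of_nonpos (abs_pos.2 (Int.cast_ne_zero.2 hl)) (abs_le_jb _) (by linarith)

lemma summable_jb_add_rpow_neg {p : ℝ} (hp : 1 < p) (c : ℤ) :
    Summable fun l : ℤ => jb (l + c) ^ (-p) := by
  simpa [Function.comp_def] using (Equiv.addRight c).summable_iff.2 (summable_jb_rpow_neg hp)

lemma tsum_jb_add_rpow_neg (p : ℝ) (c : ℤ) :
    ∑' l : ℤ, jb (l + c) ^ (-p) = ∑' l : ℤ, jb l ^ (-p) := by
  simpa using (Equiv.addRight c).tsum_eq fun l : ℤ => jb l ^ (-p)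

lemma exists_forall_tsum_subtype_le_of_le_translates {F : ℤ → ℤ → ℝ} {c p : ℝ} (hp : 1 < p)
    (hc : 0 < c) (hF0 : ∀ k l, 0 ≤ F k l)
    (hF : ∀ k l, F k l ≤ c * (jb l ^ (-p) + jb (l - k) ^ (-p) + jb (l + k) ^ (-p))) :
    ∃ C, 0 < C ∧ ∀ k (S : Set ℤ), Summable (fun l : S => F k l) ∧ ∑' l : S, F k l ≤ C := by
  set Z := ∑' l : ℤ, jb l ^ (-p)
  have hZ : 0 < Z := (summable_jb_rpow_neg hp).tsum_pos
    (fun l => rpow_nonneg (zero_le_one.trans (one_le_jb _)) _) 0 (rpow_pos_of_pos (by simp [jb]) _)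
  refine ⟨c * (3 * Z), by positivity, fun k S => ?_⟩
  have h0 := summable_jb_rpow_neg hp
  have hadd := summable_jb_add_rpow_neg hp k
  have hsub : Summable fun l : ℤ => jb (l - k) ^ (-p) := by
    simpa [sub_eq_add_neg] using summable_jb_add_rpow_neg hp (-k)
  have htsub : ∑' l : ℤ, jb (l - k) ^ (-p) = Z := by
    simpa [sub_eq_add_neg] using tsum_jb_add_rpow_neg p (-k)
  have hG := ((h0.add hsub).add hadd).mul_left c
  have hFk : Summable (F k) := hG.of_nonneg_of_le (hF0 k) (hF k)
  refine ⟨hFk.subtype S, ?_⟩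
  calc ∑' l : S, F k l ≤ ∑' l, F k l := hFk.tsum_subtype_le _ S (hF0 k)
    _ ≤ _ := hFk.tsum_le_tsum (hF k) hG
    _ = c * (3 * Z) := by
        rw [tsum_mul_left, (h0.add hsub).tsum_add hadd, h0.tsum_add hsub, htsub,
          tsum_jb_add_rpow_neg]
        ring

lemma jb_multiplier_le (x y : ℝ) {γ σ ρ β α p : ℝ} (hγα : γ ≤ α) (hα : 0 ≤ α) (hσ : 0 ≤ σ)
    (hρβ : 0 ≤ ρ + β) (hβ : 0 ≤ β) (hαρ : α ≤ ρ + 2 * β) (hασ : α ≤ σ + β)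
    (hασρ : α ≤ σ + ρ + β) (hαp : α + p ≤ σ + ρ + 2 * β) :
    jb x ^ γ * jb y ^ (-σ) * jb (x - y) ^ (-ρ) * jb (y + x) ^ (-β) * jb (y - x) ^ (-β)
      ≤ 2 ^ α * (jb y ^ (-p) + jb (y - x) ^ (-p) + jb (y + x) ^ (-p)) := by
  have hsplit : jb (y - x) ^ (-(ρ + β)) = jb (x - y) ^ (-ρ) * jb (y - x) ^ (-β) := by
    rw [neg_add, rpow_add (jb_pos _), jb_sub_comm]
  have hx : jb x ^ γ ≤ jb x ^ α := rpow_le_rpow_of_exponent_le (one_le_jb _) hγα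
  calc _ = jb x ^ γ * (jb y ^ (-σ) * jb (y - x) ^ (-(ρ + β)) * jb (y + x) ^ (-β)) := by
        rw [hsplit]; ring
    _ ≤ jb x ^ α * (jb y ^ (-σ) * jb (y - x) ^ (-(ρ + β)) * jb (y + x) ^ (-β)) :=
        mul_le_mul_of_nonneg_right hx (by unfold jb; positivity)
    _ = jb x ^ α * jb y ^ (-σ) * jb (y - x) ^ (-(ρ + β)) * jb (y + x) ^ (-β) := by ring
    _ ≤ _ := jb_rpow_mul_rpow_neg_le_sum x y hα hσ hρβ hβ (by linarith) hασ (by linarith)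
        (by linarith)

theorem multiplier_sum_bound_general (r s a : ℝ) (hr : 0 ≤ r) (hs0 : 0 < s)
    (har : a ≤ r) (hars : a < 1 + r - s) (ha2 : a < 1 / 2) :
    ∃ ε : ℝ, 0 < ε ∧ ∀ b' : ℝ, 1 / 2 < b' → b' < 1 / 2 + ε →
      ∃ C : ℝ, 0 < C ∧ ∀ k : ℤ,
        Summable (fun l : {l : ℤ // l ≠ k ∧ l ≠ -k} =>
          jb k ^ (2 * s + 2 * a) * jb (l : ℤ) ^ (-(2 * s)) * jb (k - (l : ℤ)) ^ (-(2 * r))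
            * jb ((l : ℤ) + k) ^ (-(2 - 2 * b')) * jb ((l : ℤ) - k) ^ (-(2 - 2 * b'))) ∧
        (∑' l : {l : ℤ // l ≠ k ∧ l ≠ -k},
          jb k ^ (2 * s + 2 * a) * jb (l : ℤ) ^ (-(2 * s)) * jb (k - (l : ℤ)) ^ (-(2 * r))
            * jb ((l : ℤ) + k) ^ (-(2 - 2 * b')) * jb ((l : ℤ) - k) ^ (-(2 - 2 * b'))) ≤ C := by
  set α := max (2 * s + 2 * a) 0
  have hαsr : α ≤ 2 * s + 2 * r := max_le (by linarith) (by linarith)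
  have hαr : α < 2 + 2 * r := max_lt (by linarith) (by linarith)
  have hαs : α < 2 * s + 1 := max_lt (by linarith) (by linarith)
  -- With `β = 2 - 2b' > 1 - 2ε`, the bound `ε ≤ 1/8` gives `2β > 3/2 = p`, the other two give
  -- `α ≤ 2r + 2β` and `α ≤ 2s + β`.
  set ε := min (1 / 8) (min ((2 + 2 * r - α) / 4) ((2 * s + 1 - α) / 2))
  have hε : ε ≤ 1 / 8 ∧ ε ≤ (2 + 2 * r - α) / 4 ∧ ε ≤ (2 * s + 1 - α) / 2 :=
    ⟨min_le_left _ _, (min_le_right _ _).trans (min_le_left _ _),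
      (min_le_right _ _).trans (min_le_right _ _)⟩
  refine ⟨ε, lt_min (by norm_num) (lt_min (by linarith) (by linarith)), fun b' _ hb' => ?_⟩
  obtain ⟨C, hC, hbound⟩ := exists_forall_tsum_subtype_le_of_le_translates (p := 3 / 2)
    (by norm_num) (by positivity) (fun k l => by unfold jb; positivity) fun k l : ℤ =>
      jb_multiplier_le k l (σ := 2 * s) (ρ := 2 * r) (β := 2 - 2 * b') (le_max_left _ _)
        (le_max_right _ _) (by linarith) (by linarith) (by linarith) (by linarith) (by linarith)
        (by linarith) (by linarith)
  exact ⟨C, hC, fun k => hbound k {l | l ≠ k ∧ l ≠ -k}⟩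

/-- The key uniform summation bound in the proof of the bilinear estimate. -/
theorem multiplier_sum_bound (r s a : ℝ) (hr : 0 ≤ r) (hs0 : 0 < s) (hs1 : s < 1 + r)
    (har : a ≤ r) (hars : a < 1 + r - s) (ha2 : a < 1 / 2) :
    ∃ ε : ℝ, 0 < ε ∧ ∀ b' : ℝ, 1 / 2 < b' → b' < 1 / 2 + ε →
      ∃ C : ℝ, 0 < C ∧ ∀ k : ℤ,
        Summable (fun l : {l : ℤ // l ≠ k ∧ l ≠ -k} =>
          jb k ^ (2 * s + 2 * a) * jb (l : ℤ) ^ (-(2 * s)) * jb (k - (l : ℤ)) ^ (-(2 * r))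
            * jb ((l : ℤ) + k) ^ (-(2 - 2 * b')) * jb ((l : ℤ) - k) ^ (-(2 - 2 * b'))) ∧
        (∑' l : {l : ℤ // l ≠ k ∧ l ≠ -k},
          jb k ^ (2 * s + 2 * a) * jb (l : ℤ) ^ (-(2 * s)) * jb (k - (l : ℤ)) ^ (-(2 * r))
            * jb ((l : ℤ) + k) ^ (-(2 - 2 * b')) * jb ((l : ℤ) - k) ^ (-(2 - 2 * b'))) ≤ C :=
  multiplier_sum_bound_general r s a hr hs0 har hars ha2
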